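/- arXiv:1508.00196 — 3 statements merged into one kernel-verified Lean document; each statement's English description precedes it below -/
import Mathlib

section
/- If λ lies in the Garding cone Γ_k (i.e., σ_j(λ) > 0 for all j = 1,...,k), then for every h < k and every index 1 ≤ i ≤ n, σ_h(λ|i) > 0. -/
open Finset

/-- The k-th elementary symmetric polynomial of λ ∈ ℝⁿ. -/
noncomputable def esymm (n k : ℕ) (lam : Fin n → ℝ) : ℝ :=
  ∑ s ∈ Finset.powersetCard k (Finset.univ : Finset (Fin n)), ∏ i ∈ s, lam i

/-- The Garding cone Γ_k. -/
def GammaCone (n k : ℕ) : Set (Fin n → ℝ) :=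
  {lam | ∀ j, 1 ≤ j → j ≤ k → 0 < esymm n j lam}

/-!
Write `λ = (λᵢ, λ')`, so that `σⱼ(λ) = σⱼ(λ') + λᵢ σⱼ₋₁(λ')`, and induct on `h`. If
`σₕ₋₁(λ') > 0 ≥ σₕ(λ')`, then `σₕ(λ) > 0` forces `λᵢ > 0`, and then `σₕ₊₁(λ) > 0` gives
`σₕ₋₁(λ') σₕ₊₁(λ') > σₕ(λ')²`, contradicting Newton's inequality.

Newton's inequality `Eₖ Eₖ₊₂ ≤ Eₖ₊₁²` for the means `Eⱼ = σⱼ / C(N, j)` of `N` reals is proved by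
induction on `N`: by Rolle, the derivative of `∏ (X - aⱼ)` has `N - 1` real roots, and these have
the same means `Eⱼ` for `j < N`. This reduces it to `N = k + 2`, where, in terms of the cofactors
`Pᵢ = ∏_{j ≠ i} aⱼ`, one has `σ_{N-1} = ∑ Pᵢ` and `σ_{N-2} σ_N = e₂(P)`, and the inequality is
Cauchy–Schwarz for `P`. Log-concavity of binomial coefficients then gives the unnormalized form
`σₖ σₖ₊₂ ≤ σₖ₊₁²` used above.
-/

open Polynomial

namespace Multiset

variable {R : Type*} [CommSemiring R]

@[simp] lemma esymm_zero (s : Multiset R) : s.esymm 0 = 1 := by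
  simp [esymm, powersetCard_zero_left]

lemma esymm_one (s : Multiset R) : s.esymm 1 = s.sum := by
  simp [esymm, powersetCard_one]

lemma esymm_cons_succ (a : R) (s : Multiset R) (k : ℕ) :
    (a ::ₘ s).esymm (k + 1) = s.esymm (k + 1) + a * s.esymm k := by
  simp [esymm, powersetCard_cons, map_map, sum_map_mul_left]

lemma esymm_eq_zero_of_card_lt {s : Multiset R} {k : ℕ} (h : card s < k) : s.esymm k = 0 := by
  simp [esymm, powersetCard_eq_empty k h]

lemma esymm_zero_cons (s : Multiset R) (k : ℕ) : (0 ::ₘ s).esymm k = s.esymm k := by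
  cases k with
  | zero => simp
  | succ k => rw [esymm_cons_succ, zero_mul, add_zero]

lemma two_mul_esymm_two {R : Type*} [CommRing R] (s : Multiset R) :
    2 * s.esymm 2 = s.sum ^ 2 - (s.map (· ^ 2)).sum := by
  induction s using Multiset.induction with
  | empty => simp [esymm_eq_zero_of_card_lt (show card (0 : Multiset R) < 2 by simp)]
  | cons a s ih =>
    rw [esymm_cons_succ, esymm_one, sum_cons, map_cons, sum_cons]
    linear_combination ih

end Multiset

lemma Nat.choose_mul_choose_add_two_le_sq (n k : ℕ) :
    n.choose k * n.choose (k + 2) ≤ n.choose (k + 1) ^ 2 := by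
  have h1 := Nat.choose_succ_right_eq n k
  have h2 := Nat.choose_succ_right_eq n (k + 1)
  refine le_of_mul_le_mul_right ?_ (show 0 < (k + 1) * (k + 2) by positivity)
  calc n.choose k * n.choose (k + 2) * ((k + 1) * (k + 2))
      = n.choose k * (k + 1) * (n.choose (k + 1) * (n - (k + 1))) := by rw [← h2]; ring
    _ ≤ n.choose k * (k + 2) * (n.choose (k + 1) * (n - k)) := by gcongr <;> omega
    _ = n.choose (k + 1) * (k + 2) * (n.choose k * (n - k)) := by ring
    _ = n.choose (k + 1) ^ 2 * ((k + 1) * (k + 2)) := by rw [← h1]; ring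

namespace Polynomial

lemma card_roots_derivative_of_card_roots {p : ℝ[X]}
    (hroots : Multiset.card p.roots = p.natDegree) :
    Multiset.card (derivative p).roots = (derivative p).natDegree := by
  have := card_roots_le_derivative p
  have := card_roots' (derivative p)
  rw [natDegree_derivative] at *
  omega

lemma natDegree_mul_esymm_roots_derivative {p : ℝ[X]}
    (hroots : Multiset.card p.roots = p.natDegree) {j : ℕ} (hj : j < p.natDegree) :
    (p.natDegree : ℝ) * (derivative p).roots.esymm j =
      ((p.natDegree : ℝ) - j) * p.roots.esymm j := by
  set N := p.natDegree
  have hp : p.leadingCoeff ≠ 0 := leadingCoeff_ne_zero.mpr (by rintro rfl; simp [N] at hj)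
  have hdeg : (derivative p).natDegree = N - 1 := natDegree_derivative p
  have hq := coeff_eq_esymm_roots_of_card (card_roots_derivative_of_card_roots hroots)
    (k := N - 1 - j) (by omega)
  have hp' := coeff_eq_esymm_roots_of_card hroots (k := N - j) (by omega)
  rw [coeff_derivative, show N - 1 - j + 1 = N - j by omega, hp', leadingCoeff_derivative, hdeg,
    show N - 1 - (N - 1 - j) = j by omega, show N - (N - j) = j by omega] at hq
  have hcast : ((N - 1 - j : ℕ) : ℝ) + 1 = N - j := by
    rw [Nat.cast_sub (by omega), Nat.cast_sub (by omega)]; ring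
  rw [hcast] at hq
  have hsign : p.leadingCoeff * (-1) ^ j ≠ 0 := mul_ne_zero hp (pow_ne_zero _ (by norm_num))
  apply mul_left_cancel₀ hsign
  linear_combination -hq

end Polynomial

namespace Multiset

noncomputable def esymmMean (s : Multiset ℝ) (j : ℕ) : ℝ := s.esymm j / (card s).choose j

lemma exists_esymmMean_eq_of_card_eq_succ {s : Multiset ℝ} {N : ℕ} (hs : card s = N + 1) :
    ∃ t : Multiset ℝ, card t = N ∧ ∀ j ≤ N, t.esymmMean j = s.esymmMean j := by
  set p : ℝ[X] := (s.map fun a => X - C a).prod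
  have hroots : p.roots = s := roots_multiset_prod_X_sub_C s
  have hdeg : p.natDegree = N + 1 := (natDegree_multiset_prod_X_sub_C_eq_card s).trans hs
  have hsplit : card p.roots = p.natDegree := by rw [hroots, hdeg, hs]
  have hcard : card (derivative p).roots = N := by
    rw [card_roots_derivative_of_card_roots hsplit, natDegree_derivative, hdeg, Nat.add_sub_cancel]
  refine ⟨(derivative p).roots, hcard, fun j hj => ?_⟩
  have key := natDegree_mul_esymm_roots_derivative hsplit (j := j) (by omega)
  rw [hroots, hdeg] at key
  have hchoose : (N.choose j : ℝ) * (N + 1) = (N + 1).choose j * ((N + 1 : ℕ) - j : ℝ) := by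
    rw [← Nat.cast_sub (by omega)]; exact_mod_cast Nat.choose_mul_succ_eq N j
  have hpos : ∀ M, j ≤ M → (0 : ℝ) < M.choose j := fun M hM => by
    exact_mod_cast Nat.choose_pos hM
  unfold esymmMean
  rw [hcard, hs, div_eq_div_iff (hpos N hj).ne' (hpos (N + 1) (by omega)).ne']
  apply mul_left_cancel₀ (show ((N + 1 : ℕ) : ℝ) ≠ 0 by positivity)
  push_cast at key hchoose ⊢
  linear_combination ((N + 1).choose j : ℝ) * key - s.esymm j * hchoose

end Multiset

section Cofactors

variable {ι : Type*} [Fintype ι] [DecidableEq ι]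

lemma Finset.esymm_map_univ_val_card_sub {R : Type*} [CommSemiring R] (f : ι → R) {j : ℕ}
    (hj : j ≤ Fintype.card ι) :
    (univ.val.map f).esymm (Fintype.card ι - j) = ∑ t ∈ univ.powersetCard j, ∏ x ∈ tᶜ, f x := by
  rw [Finset.esymm_map_val]
  refine Finset.sum_nbij' compl compl ?_ ?_ (fun t _ => compl_compl t) (fun t _ => compl_compl t)
    (fun t _ => by rw [compl_compl])
  · intro t ht
    simp only [mem_powersetCard_univ, card_compl] at ht ⊢
    omega
  · intro t ht
    simp only [mem_powersetCard_univ, card_compl] at ht ⊢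
    omega

lemma Finset.prod_prod_compl_singleton_of_card_eq_two {R : Type*} [CommMonoid R] (f : ι → R)
    {t : Finset ι} (ht : #t = 2) :
    ∏ x ∈ t, ∏ y ∈ {x}ᶜ, f y = (∏ y ∈ tᶜ, f y) * ∏ y, f y := by
  obtain ⟨a, b, hab, rfl⟩ := card_eq_two.mp ht
  have hcofactor : ∀ {a b : ι}, a ≠ b → ∏ y ∈ {a}ᶜ, f y = f b * ∏ y ∈ {a, b}ᶜ, f y := by
    intro a b hab
    rw [pair_comm, compl_insert, mul_prod_erase _ _ (by simpa using hab.symm)]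
  rw [prod_pair hab, hcofactor hab, hcofactor hab.symm, pair_comm b a,
    ← prod_mul_prod_compl {a, b}, prod_pair hab]
  ac_rfl

lemma two_mul_card_mul_esymm_mul_esymm_le (f : ι → ℝ) {k : ℕ} (hι : Fintype.card ι = k + 2) :
    2 * (k + 2) * ((univ.val.map f).esymm k * (univ.val.map f).esymm (k + 2)) ≤
      (k + 1) * (univ.val.map f).esymm (k + 1) ^ 2 := by
  set P : ι → ℝ := fun i => ∏ y ∈ {i}ᶜ, f y
  have hσ : ∀ j ≤ 2, (univ.val.map f).esymm (k + 2 - j) =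
      ∑ t ∈ univ.powersetCard j, ∏ x ∈ tᶜ, f x := fun j hj => by
    rw [← hι]; exact Finset.esymm_map_univ_val_card_sub f (by omega)
  have hsum : (univ.val.map f).esymm (k + 1) = ∑ i, P i := by
    simpa [powersetCard_one, P] using hσ 1 (by norm_num)
  have hpairs : (univ.val.map f).esymm k * (univ.val.map f).esymm (k + 2) =
      (univ.val.map P).esymm 2 := by
    have hcompl : (univ.val.map f).esymm k = ∑ t ∈ univ.powersetCard 2, ∏ x ∈ tᶜ, f x := by
      simpa using hσ 2 le_rfl
    have hfull : (univ.val.map f).esymm (k + 2) = ∏ y, f y := by simpa using hσ 0 (by norm_num)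
    rw [hcompl, hfull, Finset.esymm_map_val, sum_mul]
    refine sum_congr rfl fun t ht => ?_
    exact (Finset.prod_prod_compl_singleton_of_card_eq_two f (mem_powersetCard_univ.mp ht)).symm
  have hnewton := Multiset.two_mul_esymm_two (univ.val.map P)
  have hcs := sq_sum_le_card_mul_sum_sq (s := univ) (f := P)
  simp only [Multiset.map_map, Function.comp_def, sum_map_val] at hnewton
  rw [card_univ, hι] at hcs
  rw [hsum, hpairs]
  push_cast at hcs
  linear_combination (k + 2 : ℝ) * hnewton + hcs

end Cofactors

namespace Multiset

lemma esymmMean_mul_esymmMean_le_sq (s : Multiset ℝ) {k : ℕ} (hk : k + 2 ≤ card s) :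
    s.esymmMean k * s.esymmMean (k + 2) ≤ s.esymmMean (k + 1) ^ 2 := by
  obtain ⟨N, hN⟩ : ∃ N, card s = N := ⟨_, rfl⟩
  induction N generalizing s with
  | zero => omega
  | succ N ih =>
    rcases hk.lt_or_eq with hlt | heq
    · obtain ⟨t, ht, hts⟩ := exists_esymmMean_eq_of_card_eq_succ hN
      rw [← hts k (by omega), ← hts (k + 1) (by omega), ← hts (k + 2) (by omega)]
      exact ih t (by omega) ht
    · have hlist : univ.val.map s.toList.get = s := by
        rw [Fin.univ_val_map, List.ofFn_get, coe_toList]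
      have hbase := two_mul_card_mul_esymm_mul_esymm_le s.toList.get (k := k) (by simp [← heq])
      rw [hlist] at hbase
      have hchoose : 2 * ((k + 2).choose k : ℝ) = (k + 2) * (k + 1) := by
        have := Nat.choose_succ_right_eq (k + 2) k
        rw [Nat.choose_succ_self_right, show k + 2 - k = 2 by omega] at this
        exact_mod_cast by linarith
      have hpos : (0 : ℝ) < (k + 2).choose k := by exact_mod_cast Nat.choose_pos (by omega)
      unfold esymmMean
      rw [← heq, Nat.choose_succ_self_right, Nat.choose_self, Nat.cast_one, div_one, div_pow,
        div_mul_eq_mul_div, div_le_div_iff₀ hpos (by positivity)]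
      push_cast
      linear_combination ((k + 2 : ℝ) / 2) * hbase - (s.esymm (k + 1) ^ 2 / 2) * hchoose

theorem esymm_mul_esymm_le_sq (s : Multiset ℝ) (k : ℕ) :
    s.esymm k * s.esymm (k + 2) ≤ s.esymm (k + 1) ^ 2 := by
  by_cases hk : k + 2 ≤ card s
  · have hmean := esymmMean_mul_esymmMean_le_sq s hk
    have hchoose : ((card s).choose k : ℝ) * (card s).choose (k + 2) ≤
        (card s).choose (k + 1) ^ 2 := by
      exact_mod_cast Nat.choose_mul_choose_add_two_le_sq (card s) k
    have hσ : ∀ j ≤ card s, s.esymm j = (card s).choose j * s.esymmMean j := fun j hj => by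
      have : ((card s).choose j : ℝ) ≠ 0 := by exact_mod_cast (Nat.choose_pos hj).ne'
      rw [esymmMean, mul_div_cancel₀ _ this]
    rw [hσ k (by omega), hσ (k + 1) (by omega), hσ (k + 2) hk]
    set c : ℕ → ℝ := fun j => (card s).choose j
    calc c k * s.esymmMean k * (c (k + 2) * s.esymmMean (k + 2))
        = c k * c (k + 2) * (s.esymmMean k * s.esymmMean (k + 2)) := by ring
      _ ≤ c k * c (k + 2) * s.esymmMean (k + 1) ^ 2 := by gcongr
      _ ≤ c (k + 1) ^ 2 * s.esymmMean (k + 1) ^ 2 := by gcongr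
      _ = (c (k + 1) * s.esymmMean (k + 1)) ^ 2 := by ring
  · rw [esymm_eq_zero_of_card_lt (k := k + 2) (by omega), mul_zero]
    positivity

lemma esymm_pos_of_esymm_cons_pos {a : ℝ} {s : Multiset ℝ} {k : ℕ}
    (hpos : ∀ j, 1 ≤ j → j ≤ k → 0 < (a ::ₘ s).esymm j) {h : ℕ} (hh : h < k) :
    0 < s.esymm h := by
  induction h with
  | zero => simp
  | succ m ih =>
    have ht0 := ih (by omega)
    have h1 := hpos (m + 1) (by omega) (by omega)
    have h2 := hpos (m + 2) (by omega) hh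
    rw [esymm_cons_succ] at h1 h2
    have hnewton := esymm_mul_esymm_le_sq s m
    by_contra! ht1
    nlinarith [mul_pos ht0 h2, mul_nonneg (neg_nonneg.mpr ht1) h1.le]

end Multiset

lemma Finset.val_map_eq_cons_erase {ι α : Type*} [DecidableEq ι] {s : Finset ι} {i : ι}
    (hi : i ∈ s) (f : ι → α) : s.val.map f = f i ::ₘ (s.erase i).val.map f := by
  rw [← Multiset.map_cons, erase_val, Multiset.cons_erase hi]

lemma esymm_eq_esymm_map_univ (n k : ℕ) (lam : Fin n → ℝ) :
    esymm n k lam = (univ.val.map lam).esymm k :=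
  (Finset.esymm_map_val lam univ k).symm

/-- If λ ∈ Γ_k then σ_h(λ|i) > 0 for all h < k and all i. -/
theorem sigma_truncated_pos (n k : ℕ) (lam : Fin n → ℝ) (hlam : lam ∈ GammaCone n k)
    (h : ℕ) (hh : h < k) (i : Fin n) :
    0 < esymm n h (Function.update lam i 0) := by
  set rest := (univ.erase i).val.map lam
  have hcons : univ.val.map lam = lam i ::ₘ rest := val_map_eq_cons_erase (mem_univ i) lam
  have hupdate : univ.val.map (Function.update lam i 0) = 0 ::ₘ rest := by
    rw [val_map_eq_cons_erase (mem_univ i), Function.update_self]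
    congr 1
    exact Multiset.map_congr rfl fun j hj =>
      Function.update_of_ne (ne_of_mem_erase (mem_val.mp hj)) _ _
  rw [esymm_eq_esymm_map_univ, hupdate, Multiset.esymm_zero_cons]
  refine Multiset.esymm_pos_of_esymm_cons_pos (a := lam i) (fun j hj hjk => ?_) hh
  rw [← hcons, ← esymm_eq_esymm_map_univ]
  exact hlam j hj hjk
end

section
/- Let λ ∈ Γ_k with entries ordered λ_1 ≥ λ_2 ≥ ... ≥ λ_n. Then the k largest entries are positive: λ_1 ≥ λ_2 ≥ ... ≥ λ_k > 0. -/
open Finset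

lemma esymm_zero_eq (n : ℕ) (lam : Fin n → ℝ) : esymm n 0 lam = 1 := by
  simp [esymm]

lemma esymm_one_eq (n : ℕ) (lam : Fin n → ℝ) : esymm n 1 lam = ∑ i, lam i := by
  simp [esymm, powersetCard_one, Finset.sum_map]

lemma esymm_self_eq (n : ℕ) (lam : Fin n → ℝ) : esymm n n lam = ∏ i, lam i := by
  have h : (Finset.univ : Finset (Fin n)).card = n := by simp
  have h2 := Finset.powersetCard_self (Finset.univ : Finset (Fin n))
  rw [Finset.card_univ, Fintype.card_fin] at h2
  rw [esymm, h2, Finset.sum_singleton]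

lemma univ_fin_succ_eq (n : ℕ) :
    (Finset.univ : Finset (Fin (n+1)))
      = insert (Fin.last n) (Finset.univ.map Fin.castSuccEmb) := by
  ext x
  simp only [Finset.mem_univ, Finset.mem_insert, Finset.mem_map, true_iff]
  rcases Fin.eq_castSucc_or_eq_last x with ⟨j, rfl⟩ | rfl
  · exact Or.inr ⟨j, trivial, rfl⟩
  · exact Or.inl rfl

lemma last_not_mem_map (n : ℕ) :
    Fin.last n ∉ (Finset.univ.map Fin.castSuccEmb : Finset (Fin (n+1))) := by
  simp only [Finset.mem_map, Fin.coe_castSuccEmb]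
  rintro ⟨j, -, hj⟩
  exact (Fin.castSucc_lt_last j).ne hj

lemma sum_prod_powersetCard_map (n m : ℕ) (lam : Fin (n+1) → ℝ) :
    ∑ t ∈ Finset.powersetCard m (Finset.univ.map Fin.castSuccEmb : Finset (Fin (n+1))),
        ∏ i ∈ t, lam i
      = esymm n m (lam ∘ Fin.castSucc) := by
  rw [Finset.powersetCard_map, Finset.sum_map, esymm]
  refine Finset.sum_congr rfl fun t _ => ?_
  rw [show ((Finset.mapEmbedding Fin.castSuccEmb).toEmbedding t) = t.map Fin.castSuccEmb
    from rfl, Finset.prod_map]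
  rfl

/-- Recursion removing the last coordinate. -/
lemma esymm_succ (n j : ℕ) (lam : Fin (n+1) → ℝ) :
    esymm (n+1) (j+1) lam
      = esymm n (j+1) (lam ∘ Fin.castSucc)
        + lam (Fin.last n) * esymm n j (lam ∘ Fin.castSucc) := by
  classical
  have hx := last_not_mem_map n
  rw [esymm, univ_fin_succ_eq n, Finset.powersetCard_succ_insert hx]
  have hdisj : Disjoint
      (Finset.powersetCard (j+1) (Finset.univ.map Fin.castSuccEmb : Finset (Fin (n+1))))
      ((Finset.powersetCard j (Finset.univ.map Fin.castSuccEmb : Finset (Fin (n+1)))).image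
        (insert (Fin.last n))) := by
    rw [Finset.disjoint_left]
    intro t ht ht'
    rcases Finset.mem_powersetCard.1 ht with ⟨hsub, -⟩
    rcases Finset.mem_image.1 ht' with ⟨u, -, rfl⟩
    exact hx (hsub (Finset.mem_insert_self _ _))
  rw [Finset.sum_union hdisj]
  have hinj : ∀ t ∈ Finset.powersetCard j
        (Finset.univ.map Fin.castSuccEmb : Finset (Fin (n+1))),
      ∀ t' ∈ Finset.powersetCard j
        (Finset.univ.map Fin.castSuccEmb : Finset (Fin (n+1))),
      insert (Fin.last n) t = insert (Fin.last n) t' → t = t' := by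
    intro t ht t' ht' h
    have h1 : Fin.last n ∉ t := fun hm => hx ((Finset.mem_powersetCard.1 ht).1 hm)
    have h2 : Fin.last n ∉ t' := fun hm => hx ((Finset.mem_powersetCard.1 ht').1 hm)
    have := congrArg (Finset.erase · (Fin.last n)) h
    simpa [Finset.erase_insert h1, Finset.erase_insert h2] using this
  rw [Finset.sum_image hinj, sum_prod_powersetCard_map]
  congr 1
  rw [← sum_prod_powersetCard_map n j lam, Finset.mul_sum]
  refine Finset.sum_congr rfl fun t ht => ?_
  have h1 : Fin.last n ∉ t := fun hm => hx ((Finset.mem_powersetCard.1 ht).1 hm)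
  rw [Finset.prod_insert h1]

lemma key : ∀ k, 1 ≤ k → ∀ n, k ≤ n → ∀ lam : Fin n → ℝ, Antitone lam →
    (∀ j, 1 ≤ j → j ≤ k → 0 < esymm n j lam) →
    ∀ h : k - 1 < n, 0 < lam ⟨k - 1, h⟩ := by
  intro k hk1
  induction k, hk1 using Nat.le_induction with
  | base =>
    intro n hn lam hsort hG h
    have hs : 0 < ∑ i, lam i := by
      have := hG 1 le_rfl le_rfl
      rwa [esymm_one_eq] at this
    by_contra hle
    push_neg at hle
    have : ∑ i, lam i ≤ 0 := by
      refine Finset.sum_nonpos fun i _ => ?_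
      exact le_trans (hsort (show (⟨0, h⟩ : Fin n) ≤ i from Fin.mk_le_of_le_val (Nat.zero_le _)))
        hle
    linarith
  | succ k hk IH =>
    -- inner induction on n ≥ k+1
    intro n hn
    induction n, hn using Nat.le_induction with
    | base =>
      intro lam hsort hG h
      -- n = k+1 : all j ≤ k+1 positive; first use IH for the first k entries
      have hk1 : k - 1 < k + 1 := by omega
      have hprev : 0 < lam ⟨k - 1, hk1⟩ :=
        IH (k+1) (by omega) lam hsort (fun j h1 h2 => hG j h1 (by omega)) hk1
      have hall : ∀ i : Fin (k+1), (i : ℕ) < k → 0 < lam i := by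
        intro i hi
        refine lt_of_lt_of_le hprev (hsort ?_)
        exact Fin.le_def.mpr (by show (i:ℕ) ≤ k - 1; omega)
      have hprod : 0 < ∏ i, lam i := by
        have := hG (k+1) (by omega) le_rfl
        rwa [esymm_self_eq] at this
      have hk2 : (⟨k, by omega⟩ : Fin (k+1)) ∈ (Finset.univ : Finset (Fin (k+1))) :=
        Finset.mem_univ _
      rw [← Finset.mul_prod_erase _ _ hk2] at hprod
      have herase : 0 < ∏ i ∈ (Finset.univ : Finset (Fin (k+1))).erase ⟨k, by omega⟩, lam i := by
        refine Finset.prod_pos fun i hi => ?_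
        have hne := Finset.ne_of_mem_erase hi
        refine hall i ?_
        have : (i : ℕ) ≤ k := by omega
        rcases lt_or_eq_of_le this with h' | h'
        · exact h'
        · exact absurd (Fin.ext h') hne
      have : (0:ℝ) < lam ⟨k, by omega⟩ := by
        by_contra hle
        push_neg at hle
        nlinarith
      simpa using this
    | succ n hn IHn =>
      intro lam hsort hG h
      rcases lt_or_ge 0 (lam (Fin.last n)) with hlast | hlast
      · refine lt_of_lt_of_le hlast (hsort ?_)
        exact Fin.le_def.mpr (by show k + 1 - 1 ≤ n; omega)
      · set mu : Fin n → ℝ := lam ∘ Fin.castSucc with hmu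
        have hsort' : Antitone mu := fun a b hab =>
          hsort (Fin.castSucc_le_castSucc_iff.mpr hab)
        have hG' : ∀ j, 1 ≤ j → j ≤ k + 1 → 0 < esymm n j mu := by
          intro j
          induction j using Nat.strong_induction_on with
          | _ j ih =>
            intro h1 h2
            obtain ⟨m, rfl⟩ : ∃ m, j = m + 1 := ⟨j - 1, by omega⟩
            have hrec := esymm_succ n m lam
            have hpos := hG (m+1) (by omega) h2
            have hnn : 0 ≤ esymm n m mu := by
              rcases Nat.eq_zero_or_pos m with rfl | hm
              · rw [esymm_zero_eq]; norm_num
              · exact le_of_lt (ih m (by omega) hm (by omega))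
            have hmul : lam (Fin.last n) * esymm n m mu ≤ 0 :=
              mul_nonpos_of_nonpos_of_nonneg hlast hnn
            rw [hmu]
            rw [hrec] at hpos
            have : esymm n (m+1) (lam ∘ Fin.castSucc) = esymm n (m+1) mu := rfl
            linarith [hpos, hmul]
        have h' : k + 1 - 1 < n := by omega
        have := IHn mu hsort' hG' h'
        have heq : mu ⟨k + 1 - 1, h'⟩ = lam ⟨k + 1 - 1, h⟩ := by
          simp only [hmu, Function.comp_apply]
          congr 1
        rwa [heq] at this

/-- For λ ∈ Γ_k ordered decreasingly, the k largest entries are positive. -/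
theorem first_k_entries_pos (n k : ℕ) (hk1 : 1 ≤ k) (hkn : k ≤ n)
    (lam : Fin n → ℝ) (hlam : lam ∈ GammaCone n k) (hsort : Antitone lam)
    (i : Fin n) (hi : (i : ℕ) < k) :
    0 < lam i := by
  have h : k - 1 < n := by omega
  have hpos := key k hk1 n hkn lam hsort hlam h
  refine lt_of_lt_of_le hpos (hsort ?_)
  exact Fin.le_def.mpr (by show (i:ℕ) ≤ k - 1; omega)
end

section
/- Let λ ∈ Γ_k with λ_n = min_i λ_i < 0. Then σ_{k-1}(λ|n) ≥ (1/(n−k+1)) Σ_{i=1}^n σ_{k-1}(λ|i), i.e., the partial derivative of σ_k in the direction of the smallest (negative) eigenvalue controls a fixed fraction of the total trace Σ_i σ_{k-1}(λ|i). -/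
open Finset


lemma filter_powersetCard (n j : ℕ) (i : Fin n) :
    (Finset.powersetCard j (Finset.univ : Finset (Fin n))).filter (fun s => i ∉ s)
      = (Finset.univ.erase i).powersetCard j := by
  ext s
  simp only [Finset.mem_filter, Finset.mem_powersetCard, Finset.subset_erase]
  tauto

lemma esymm_update_eq (n j : ℕ) (lam : Fin n → ℝ) (i : Fin n) :
    esymm n j (Function.update lam i 0) =
      ∑ s ∈ (Finset.univ.erase i).powersetCard j, ∏ x ∈ s, lam x := by
  unfold esymm
  rw [← Finset.sum_filter_add_sum_filter_not
    (Finset.powersetCard j Finset.univ) (fun s => i ∈ s)]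
  have h1 : ∑ s ∈ (Finset.powersetCard j (Finset.univ : Finset (Fin n))).filter
      (fun s => i ∈ s), ∏ x ∈ s, Function.update lam i 0 x = 0 := by
    apply Finset.sum_eq_zero
    intro s hs
    simp only [Finset.mem_filter] at hs
    exact Finset.prod_eq_zero hs.2 (by simp)
  rw [h1, zero_add, filter_powersetCard]
  apply Finset.sum_congr rfl
  intro s hs
  apply Finset.prod_congr rfl
  intro x hx
  have hxi : x ≠ i := by
    rw [Finset.mem_powersetCard] at hs
    intro h
    exact (Finset.mem_erase.mp (hs.1 hx)).1 (by rw [h])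
  simp [Function.update_of_ne hxi]

lemma esymm_rec (n j : ℕ) (lam : Fin n → ℝ) (i : Fin n) :
    esymm n (j+1) lam =
      esymm n (j+1) (Function.update lam i 0)
        + lam i * esymm n j (Function.update lam i 0) := by
  rw [esymm_update_eq, esymm_update_eq]
  unfold esymm
  have huniv : (Finset.univ : Finset (Fin n)) = insert i (Finset.univ.erase i) := by
    rw [Finset.insert_erase (Finset.mem_univ i)]
  conv_lhs => rw [huniv]
  rw [Finset.powersetCard_succ_insert (Finset.notMem_erase i _)]
  rw [Finset.sum_union]
  · congr 1
    rw [Finset.sum_image, Finset.mul_sum]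
    · apply Finset.sum_congr rfl
      intro t ht
      rw [Finset.prod_insert]
      intro hmem
      exact (Finset.mem_erase.mp ((Finset.mem_powersetCard.mp ht).1 hmem)).1 rfl
    · intro a ha b hb hab
      have hia : i ∉ a :=
        fun h => (Finset.mem_erase.mp ((Finset.mem_powersetCard.mp ha).1 h)).1 rfl
      have hib : i ∉ b :=
        fun h => (Finset.mem_erase.mp ((Finset.mem_powersetCard.mp hb).1 h)).1 rfl
      have := congrArg (fun s => Finset.erase s i) hab
      simpa [Finset.erase_insert hia, Finset.erase_insert hib] using this
  · rw [Finset.disjoint_left]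
    intro s hs hs'
    have hia : i ∉ s :=
      fun h => (Finset.mem_erase.mp ((Finset.mem_powersetCard.mp hs).1 h)).1 rfl
    rw [Finset.mem_image] at hs'
    obtain ⟨t, _, rfl⟩ := hs'
    exact hia (Finset.mem_insert_self i t)

lemma sum_esymm_update (n j : ℕ) (lam : Fin n → ℝ) :
    ∑ i : Fin n, esymm n j (Function.update lam i 0)
      = ((n - j : ℕ) : ℝ) * esymm n j lam := by
  simp_rw [esymm_update_eq]
  have h : ∀ i : Fin n, ∑ s ∈ (Finset.univ.erase i).powersetCard j, ∏ x ∈ s, lam x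
      = ∑ s ∈ Finset.powersetCard j (Finset.univ : Finset (Fin n)),
          if i ∉ s then ∏ x ∈ s, lam x else 0 := by
    intro i
    rw [← filter_powersetCard, Finset.sum_filter]
  simp_rw [h]
  rw [Finset.sum_comm]
  unfold esymm
  rw [Finset.mul_sum]
  apply Finset.sum_congr rfl
  intro s hs
  rw [← Finset.sum_filter]
  have hf : Finset.univ.filter (fun i => i ∉ s) = sᶜ := by
    ext x; simp
  rw [hf, Finset.sum_const, Finset.card_compl, (Finset.mem_powersetCard.mp hs).2,
    nsmul_eq_mul, Fintype.card_fin]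

lemma esymm_zero (n : ℕ) (f : Fin n → ℝ) : esymm n 0 f = 1 := by
  simp [esymm]

lemma esymm_update_pos (n k : ℕ) (lam : Fin n → ℝ) (i : Fin n) (hneg : lam i < 0)
    (hlam : ∀ j, 1 ≤ j → j ≤ k → 0 < esymm n j lam) :
    ∀ j, j ≤ k - 1 → 0 < esymm n j (Function.update lam i 0) := by
  intro j
  induction j with
  | zero => intro _; rw [esymm_zero]; norm_num
  | succ m ih =>
    intro hm
    have h1 : 0 < esymm n (m+1) lam := hlam (m+1) (by omega) (by omega)
    have h2 : 0 < esymm n m (Function.update lam i 0) := ih (by omega)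
    have h3 := esymm_rec n m lam i
    nlinarith

/-- If λ ∈ Γ_k and λ_n = min_i λ_i < 0, then
σ_{k-1}(λ|n) ≥ (1/(n-k+1)) Σ_i σ_{k-1}(λ|i). -/
theorem min_direction_dominates (n k : ℕ) (hn : 1 ≤ n) (hk1 : 1 ≤ k) (hkn : k ≤ n)
    (lam : Fin n → ℝ) (hlam : lam ∈ GammaCone n k)
    (hmin : ∀ i : Fin n, lam ⟨n - 1, by omega⟩ ≤ lam i)
    (hneg : lam ⟨n - 1, by omega⟩ < 0) :
    (1 / ((n : ℝ) - (k : ℝ) + 1)) *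
        ∑ i : Fin n, esymm n (k - 1) (Function.update lam i 0) ≤
      esymm n (k - 1) (Function.update lam (⟨n - 1, by omega⟩ : Fin n) 0) := by
  have hsum := sum_esymm_update n (k - 1) lam
  rw [hsum]
  have hc : ((n - (k - 1) : ℕ) : ℝ) = (n : ℝ) - (k : ℝ) + 1 := by
    have : n - (k - 1) = n - k + 1 := by omega
    rw [this]
    push_cast [Nat.cast_sub hkn]
    ring
  have hcpos : (0:ℝ) < (n : ℝ) - (k : ℝ) + 1 := by
    rw [← hc]
    have : 1 ≤ n - (k - 1) := by omega
    exact_mod_cast Nat.lt_of_lt_of_le Nat.zero_lt_one (by exact_mod_cast this)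
  rw [hc, one_div, inv_mul_cancel_left₀ (ne_of_gt hcpos)]
  rcases eq_or_lt_of_le hk1 with h1 | h2
  · -- k = 1
    have : k - 1 = 0 := by omega
    rw [this, esymm_zero, esymm_zero]
  · -- k ≥ 2
    obtain ⟨m, rfl⟩ : ∃ m, k = m + 2 := ⟨k - 2, by omega⟩
    have hk1' : m + 2 - 1 = m + 1 := by omega
    rw [hk1']
    set i0 : Fin n := ⟨n - 1, by omega⟩
    have hrec := esymm_rec n m lam i0
    have hpos : 0 < esymm n m (Function.update lam i0 0) :=
      esymm_update_pos n (m + 2) lam i0 hneg (fun j a b => hlam j a b) m (by omega)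
    nlinarith
end
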